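/- arXiv:2605.14739 — 2 statements merged into one kernel-verified Lean document; each statement's English description precedes it below -/
import Mathlib

section
/- Let X be a real vector space with cone K such that span(K) has dimension at least 2 and K has a nonzero extremal element. Let v be an extremal of K, f ∈ K' with f(v) ≠ 0, S a cone automorphism, and u ∈ K \ ℝ₊·S(v). Then T(x) := S(x) + f(x)·u is positive and invertible, but T⁻¹ is not positive. -/
/-!
`T = S + f ⊗ u` is a rank-one perturbation of an invertible map, inverted by the
Sherman–Morrison formula: with `c = 1 + f (S⁻¹ u)` (positive, as `f ≥ 0` on `K`), the
preimage of `S x` is `x - (f x / c) • S⁻¹ u`. For `x = v` this preimage `w` lies outside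
`K`: otherwise `v - w = S⁻¹ (f w • u)` would sit between `0` and `v`, so extremality of `v`
forces `f w • u ∈ ℝ₊ • S v`, which is excluded when `f w > 0`, while `f w = 0` gives `w = v`
and hence `f v = 0`.
-/

/-- `x` is an extremal element of the cone `K`. -/
def IsExtremal {X : Type*} [AddCommGroup X] [Module ℝ X] (K : Set X) (x : X) : Prop :=
  x ∈ K ∧ ∀ z, z ∈ K → x - z ∈ K → ∃ l : ℝ, 0 ≤ l ∧ l ≤ 1 ∧ z = l • x

section ShermanMorrison

variable {𝕜 V : Type*} [Field 𝕜] [AddCommGroup V] [Module 𝕜 V]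

theorem LinearEquiv.add_smulRight_apply_sub_smul_symm (S : V ≃ₗ[𝕜] V) (f : V →ₗ[𝕜] 𝕜)
    (u : V) (hc : 1 + f (S.symm u) ≠ 0) (x : V) :
    (S.toLinearMap + f.smulRight u) (x - (f x / (1 + f (S.symm u))) • S.symm u) = S x := by
  have hcoef : f x - f x / (1 + f (S.symm u)) * f (S.symm u) = f x / (1 + f (S.symm u)) := by
    field_simp
    ring
  rw [LinearMap.add_apply, LinearMap.smulRight_apply, _root_.map_sub, _root_.map_smul,
    LinearEquiv.coe_coe, _root_.map_sub, _root_.map_smul, LinearEquiv.apply_symm_apply,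
    smul_eq_mul, hcoef]
  abel

theorem LinearEquiv.bijective_add_smulRight (S : V ≃ₗ[𝕜] V) (f : V →ₗ[𝕜] 𝕜) (u : V)
    (hc : 1 + f (S.symm u) ≠ 0) : Function.Bijective (S.toLinearMap + f.smulRight u) := by
  refine ⟨?_, fun y => ?_⟩
  · refine (injective_iff_map_eq_zero _).2 fun x hx => ?_
    have hSx : S x = -(f x • u) := eq_neg_of_add_eq_zero_left hx
    have hfx : f x * (1 + f (S.symm u)) = 0 := by
      have := congrArg (f ∘ S.symm) hSx
      simp only [Function.comp_apply, LinearEquiv.symm_apply_apply, _root_.map_neg,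
        _root_.map_smul, smul_eq_mul] at this
      linear_combination this
    have hfx0 : f x = 0 := (mul_eq_zero.1 hfx).resolve_right hc
    simpa [hfx0] using hSx
  · exact ⟨_, (S.add_smulRight_apply_sub_smul_symm f u hc (S.symm y)).trans
      (S.apply_symm_apply y)⟩

end ShermanMorrison

theorem apply_add_smul_ne_of_isExtremal {X : Type*} [AddCommGroup X] [Module ℝ X] {K : Set X}
    (hsmul : ∀ (c : ℝ), 0 ≤ c → ∀ x ∈ K, c • x ∈ K) {v : X} (hv : IsExtremal K v)
    {f : X →ₗ[ℝ] ℝ} (hf : ∀ x ∈ K, 0 ≤ f x) (hfv : f v ≠ 0)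
    {S : X ≃ₗ[ℝ] X} (hS' : ∀ x ∈ K, S.symm x ∈ K)
    {u : X} (hu : u ∈ K) (hu' : ∀ l : ℝ, 0 ≤ l → u ≠ l • S v) :
    ∀ x ∈ K, S x + f x • u ≠ S v := by
  intro x hx hTx
  have hx_eq : x = v - S.symm (f x • u) := S.injective <| by simp [← hTx]
  obtain ⟨l, hl0, -, hl⟩ := hv.2 _ (hS' _ (hsmul _ (hf x hx) u hu)) (hx_eq ▸ hx)
  rcases (hf x hx).eq_or_lt with h0 | hpos
  · exact hfv (by simpa [← h0] using congrArg f hx_eq.symm)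
  · have hlu : f x • u = l • S v := by simpa using congrArg S hl
    refine hu' (l / f x) (div_nonneg hl0 hpos.le) ?_
    rw [div_eq_inv_mul, mul_smul, ← hlu, inv_smul_smul₀ hpos.ne']

theorem stmt_14_general {X : Type*} [AddCommGroup X] [Module ℝ X] (K : Set X)
    (hadd : ∀ x ∈ K, ∀ y ∈ K, x + y ∈ K)
    (hsmul : ∀ (c : ℝ), 0 ≤ c → ∀ x ∈ K, c • x ∈ K)
    (v : X) (hv : IsExtremal K v)
    (f : X →ₗ[ℝ] ℝ) (hf : ∀ x ∈ K, 0 ≤ f x) (hfv : f v ≠ 0)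
    (S : X ≃ₗ[ℝ] X) (hS : ∀ x ∈ K, S x ∈ K) (hS' : ∀ x ∈ K, S.symm x ∈ K)
    (u : X) (hu : u ∈ K) (hu' : ∀ l : ℝ, 0 ≤ l → u ≠ l • S v)
    (T : X → X) (hT : ∀ x, T x = S x + f x • u) :
    (∀ x ∈ K, T x ∈ K) ∧ Function.Bijective T ∧ ∃ x, x ∉ K ∧ T x ∈ K := by
  have hT' : T = S.toLinearMap + f.smulRight u := funext fun x => by simp [hT]
  have hc : 1 + f (S.symm u) ≠ 0 := (add_pos_of_pos_of_nonneg one_pos (hf _ (hS' u hu))).ne'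
  have hTv : T (v - (f v / (1 + f (S.symm u))) • S.symm u) = S v := by
    rw [hT']
    exact S.add_smulRight_apply_sub_smul_symm f u hc v
  refine ⟨fun x hx => hT x ▸ hadd _ (hS x hx) _ (hsmul _ (hf x hx) u hu),
    hT' ▸ S.bijective_add_smulRight f u hc, _, fun hx => ?_, hTv ▸ hS v hv.1⟩
  exact apply_add_smul_ne_of_isExtremal hsmul hv hf hfv hS' hu hu' _ hx (hT _ ▸ hTv)

theorem stmt_14 {X : Type*} [AddCommGroup X] [Module ℝ X] (K : Set X)
    (hadd : ∀ x ∈ K, ∀ y ∈ K, x + y ∈ K)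
    (hsmul : ∀ (c : ℝ), 0 ≤ c → ∀ x ∈ K, c • x ∈ K)
    (hpointed : ∀ x ∈ K, -x ∈ K → x = 0)
    (hdim : 2 ≤ Module.rank ℝ (Submodule.span ℝ K))
    (v : X) (hv : IsExtremal K v) (hv0 : v ≠ 0)
    (f : X →ₗ[ℝ] ℝ) (hf : ∀ x ∈ K, 0 ≤ f x) (hfv : f v ≠ 0)
    (S : X ≃ₗ[ℝ] X) (hS : ∀ x ∈ K, S x ∈ K) (hS' : ∀ x ∈ K, S.symm x ∈ K)
    (u : X) (hu : u ∈ K) (hu' : ∀ l : ℝ, 0 ≤ l → u ≠ l • S v)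
    (T : X → X) (hT : ∀ x, T x = S x + f x • u) :
    (∀ x ∈ K, T x ∈ K) ∧ Function.Bijective T ∧ ∃ x, x ∉ K ∧ T x ∈ K :=
  stmt_14_general K hadd hsmul v hv f hf hfv S hS hS' u hu hu' T hT
end

section
/- Let H be a real Hilbert space and K = {(x,α) ∈ H × ℝ : α ≥ ‖x‖} the Lorentz (ice-cream) cone. Fix x̂ ∈ H with ‖x̂‖ = 1 and define f(x,α) = α + ⟨x, x̂⟩ and T(x,α) = (x, 2α + ⟨x,x̂⟩). Then f is nonnegative on K, T is positive and invertible, but T⁻¹ is not positive: indeed (x̂, 0) ∉ K while T(x̂,0) = (x̂,1) ∈ K. -/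
theorem stmt_17 {H : Type*} [NormedAddCommGroup H] [InnerProductSpace ℝ H]
    (K : Set (H × ℝ)) (hK : K = {p : H × ℝ | ‖p.1‖ ≤ p.2})
    (xhat : H) (hxhat : ‖xhat‖ = 1)
    (f : H × ℝ → ℝ) (hf : ∀ p, f p = p.2 + inner ℝ p.1 xhat)
    (T : H × ℝ → H × ℝ)
    (hT : ∀ p, T p = (p.1, 2 * p.2 + inner ℝ p.1 xhat)) :
    (∀ p ∈ K, 0 ≤ f p) ∧ (∀ p ∈ K, T p ∈ K) ∧ Function.Bijective T ∧
      (xhat, (0 : ℝ)) ∉ K ∧ T (xhat, (0 : ℝ)) = (xhat, (1 : ℝ)) ∧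
      (xhat, (1 : ℝ)) ∈ K := by
  subst hK
  have cs : ∀ x : H, |inner ℝ x xhat| ≤ ‖x‖ := by
    intro x
    calc |(inner ℝ x xhat : ℝ)| ≤ ‖x‖ * ‖xhat‖ := abs_real_inner_le_norm x xhat
      _ = ‖x‖ := by rw [hxhat, mul_one]
  refine ⟨?_, ?_, ?_, ?_, ?_, ?_⟩
  · intro p hp
    have h1 := (abs_le.mp (cs p.1)).1
    simp only [Set.mem_setOf_eq] at hp
    rw [hf]; linarith
  · intro p hp
    have h1 := (abs_le.mp (cs p.1)).1
    simp only [Set.mem_setOf_eq] at hp ⊢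
    rw [hT]
    simp only
    linarith
  · apply Function.bijective_iff_has_inverse.mpr
    refine ⟨fun p => (p.1, (p.2 - inner ℝ p.1 xhat) / 2), ?_, ?_⟩
    · intro p; rw [hT]; simp
    · intro p; rw [hT]; simp; ring
  · simp only [Set.mem_setOf_eq]
    rw [hxhat]; norm_num
  · rw [hT]
    have : (inner ℝ xhat xhat : ℝ) = 1 := by
      rw [real_inner_self_eq_norm_sq, hxhat]; norm_num
    simp [this, hxhat]
  · simp [hxhat]
end
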